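/- arXiv:1012.4577 — 2 statements merged into one kernel-verified Lean document; each statement's English description precedes it below -/
import Mathlib

section
/- (Corollary 2.) Let L be a lattice in ℂ, let p₁ and p₂ be distinct prime numbers, and let L₁, L₂ ≤ L be sublattices with [L : L₁] = p₁ and [L : L₂] = p₂. Let e₁ be any element of L₁ with e₁ ∉ p₁L, and e₂ any element of L₂ with e₂ ∉ p₂L. Then L₁ ∩ L₂ equals the additive subgroup generated by (p₁p₂)L together with the elements p₁•e₂ and p₂•e₁. -/
/-!
A rank-two lattice has `[L : pL] = p²`, so a subgroup `L₁` of index `p` contains `pL` with index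
`p`, and any `e₁ ∈ L₁ \ pL` already generates `L₁` modulo `pL`: `L₁ = ℤe₁ + p₁L`, and likewise
`L₂ = ℤe₂ + p₂L`. For `x` in both, `p₂x ∈ ℤ(p₂e₁) + p₁p₂L` and `p₁x ∈ ℤ(p₁e₂) + p₁p₂L`, and
since `p₁`, `p₂` are coprime, `x` is an integral combination of `p₁x` and `p₂x`.
-/

open Pointwise

/-- A lattice in ℂ: a discrete additive subgroup spanning ℂ over ℝ. -/
def IsLattice (L : AddSubgroup ℂ) : Prop :=
  DiscreteTopology L ∧ Submodule.span ℝ (L : Set ℂ) = ⊤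

namespace AddSubgroup

variable {G : Type*} [AddCommGroup G]

lemma natCast_zsmul_le_of_relIndex_eq {H K : AddSubgroup G} {n : ℕ} (h : H.relIndex K = n) :
    (n : ℤ) • K ≤ H := by
  rintro _ ⟨x, hx, rfl⟩
  simpa [← h] using H.nsmul_relIndex_mem hx

lemma mem_of_zsmul_mem_of_isCoprime {H : AddSubgroup G} {m n : ℤ} (hmn : IsCoprime m n) {x : G}
    (hm : m • x ∈ H) (hn : n • x ∈ H) : x ∈ H := by
  obtain ⟨a, b, hab⟩ := hmn
  have hx : x = a • m • x + b • n • x := by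
    rw [smul_smul, smul_smul, ← add_smul, hab, one_smul]
  rw [hx]
  exact add_mem (zsmul_mem hm a) (zsmul_mem hn b)

lemma zsmul_le_zsmul_of_dvd {L : AddSubgroup G} {m n : ℤ} (h : m ∣ n) : n • L ≤ m • L := by
  obtain ⟨k, rfl⟩ := h
  rintro _ ⟨x, hx, rfl⟩
  exact ⟨k • x, zsmul_mem hx k, by simp [mul_zsmul]⟩

lemma zsmul_mem_zmultiples_sup_zsmul {L : AddSubgroup G} {m n : ℤ} {e x : G}
    (hx : x ∈ zmultiples e ⊔ m • L) : n • x ∈ zmultiples (n • e) ⊔ (m * n) • L := by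
  obtain ⟨a, ha, b, hb, rfl⟩ := mem_sup.1 hx
  obtain ⟨k, rfl⟩ := mem_zmultiples_iff.1 ha
  obtain ⟨y, hy, rfl⟩ := (mem_smul_pointwise_iff_exists _ _ _).1 hb
  rw [smul_add]
  exact add_mem_sup (mem_zmultiples_iff.2 ⟨k, zsmul_comm e n k⟩)
    ((mem_smul_pointwise_iff_exists _ _ _).2 ⟨y, hy, by rw [smul_smul, mul_comm]⟩)

lemma zmultiples_sup_zsmul_inf_zmultiples_sup_zsmul {L : AddSubgroup G} {m n : ℤ}
    (hmn : IsCoprime m n) {e₁ e₂ : G} (he₁ : e₁ ∈ L) (he₂ : e₂ ∈ L) :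
    (zmultiples e₁ ⊔ m • L) ⊓ (zmultiples e₂ ⊔ n • L) =
      (m * n) • L ⊔ zmultiples (m • e₂) ⊔ zmultiples (n • e₁) := by
  apply le_antisymm
  · rintro x ⟨hx₁, hx₂⟩
    have hmx := zsmul_mem_zmultiples_sup_zsmul (n := m) hx₂
    have hnx := zsmul_mem_zmultiples_sup_zsmul (n := n) hx₁
    rw [mul_comm n m] at hmx
    refine mem_of_zsmul_mem_of_isCoprime hmn ?_ ?_
    · exact (sup_le (le_sup_right.trans le_sup_left) (le_sup_left.trans le_sup_left) :
        zmultiples (m • e₂) ⊔ (m * n) • L ≤ _) hmx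
    · exact (sup_le le_sup_right (le_sup_left.trans le_sup_left) :
        zmultiples (n • e₁) ⊔ (m * n) • L ≤ _) hnx
  · refine sup_le (sup_le (le_inf ?_ ?_) ?_) ?_
    · exact (zsmul_le_zsmul_of_dvd (dvd_mul_right m n)).trans le_sup_right
    · exact (zsmul_le_zsmul_of_dvd (dvd_mul_left n m)).trans le_sup_right
    · exact zmultiples_le.2 ⟨mem_sup_right (smul_mem_pointwise_smul e₂ m L he₂),
        mem_sup_left (zsmul_mem (mem_zmultiples e₂) m)⟩
    · exact zmultiples_le.2 ⟨mem_sup_left (zsmul_mem (mem_zmultiples e₁) n),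
        mem_sup_right (smul_mem_pointwise_smul e₁ n L he₁)⟩

lemma eq_zmultiples_sup_of_relIndex_eq_prime {L L₁ : AddSubgroup G} {p : ℕ} (hp : p.Prime)
    (hpL : ((p : ℤ) • L).relIndex L = p ^ 2) (h₁ : L₁ ≤ L) (hidx : L₁.relIndex L = p)
    {e : G} (he : e ∈ L₁) (he' : e ∉ (p : ℤ) • L) :
    L₁ = zmultiples e ⊔ (p : ℤ) • L := by
  set K := zmultiples e ⊔ (p : ℤ) • L
  have hpK : (p : ℤ) • L ≤ K := le_sup_right
  have hKL₁ : K ≤ L₁ := sup_le (zmultiples_le.2 he) (natCast_zsmul_le_of_relIndex_eq hidx)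
  have hpL₁ : ((p : ℤ) • L).relIndex L₁ = p := by
    have := relIndex_mul_relIndex _ _ _ (hpK.trans hKL₁) h₁
    rw [hidx, hpL, sq] at this
    exact Nat.eq_of_mul_eq_mul_right hp.pos this
  have hprime : (((p : ℤ) • L).relIndex K * K.relIndex L₁).Prime := by
    rwa [relIndex_mul_relIndex _ _ _ hpK hKL₁, hpL₁]
  have hpK_ne : ((p : ℤ) • L).relIndex K ≠ 1 :=
    fun h ↦ he' (relIndex_eq_one.1 h (mem_sup_left (mem_zmultiples e)))
  obtain ⟨-, hKL₁'⟩ := (Nat.prime_mul_iff.1 hprime).resolve_right (fun h ↦ hpK_ne h.2)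
  exact le_antisymm (relIndex_eq_one.1 hKL₁') hKL₁

end AddSubgroup

lemma IsLattice.relIndex_natCast_zsmul {L : AddSubgroup ℂ} (hL : IsLattice L) (n : ℕ) :
    ((n : ℤ) • L).relIndex L = n ^ 2 := by
  let M : Submodule ℤ ℂ := L.toIntSubmodule
  have : DiscreteTopology M := hL.1
  have : IsZLattice ℝ M := ⟨hL.2⟩
  have hrank : Module.finrank ℤ L = 2 := by
    rw [← Complex.finrank_real_complex]
    exact ZLattice.rank ℝ M
  have hmap : (n : ℤ) • L = L.map (nsmulAddMonoidHom n) := by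
    ext x
    simp [AddSubgroup.mem_smul_pointwise_iff_exists]
  rw [hmap, AddSubgroup.relIndex_map_nsmul, hrank]

/-- (Corollary 2.)  Let `p₁ ≠ p₂` be primes and `L₁, L₂ ≤ L` sublattices with
`[L : L₁] = p₁`, `[L : L₂] = p₂`.  For any `e₁ ∈ L₁ \ p₁L` and `e₂ ∈ L₂ \ p₂L`,
the intersection `L₁ ∩ L₂` equals the subgroup generated by `(p₁p₂)L` together
with `p₁ • e₂` and `p₂ • e₁`. -/
theorem inter_of_distinct_primes_repr
    (L : AddSubgroup ℂ) (hL : IsLattice L)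
    (p₁ p₂ : ℕ) (hp₁ : p₁.Prime) (hp₂ : p₂.Prime) (hne : p₁ ≠ p₂)
    (L₁ L₂ : AddSubgroup ℂ)
    (h₁ : L₁ ≤ L) (h₂ : L₂ ≤ L)
    (hidx₁ : L₁.relIndex L = p₁) (hidx₂ : L₂.relIndex L = p₂)
    (e₁ : ℂ) (he₁ : e₁ ∈ L₁) (he₁' : e₁ ∉ (p₁ : ℤ) • L)
    (e₂ : ℂ) (he₂ : e₂ ∈ L₂) (he₂' : e₂ ∉ (p₂ : ℤ) • L) :
    L₁ ⊓ L₂ =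
      (((p₁ * p₂ : ℕ) : ℤ) • L) ⊔ AddSubgroup.zmultiples ((p₁ : ℤ) • e₂) ⊔
        AddSubgroup.zmultiples ((p₂ : ℤ) • e₁) := by
  have hcop : IsCoprime (p₁ : ℤ) p₂ :=
    Nat.isCoprime_iff_coprime.2 ((Nat.coprime_primes hp₁ hp₂).2 hne)
  rw [AddSubgroup.eq_zmultiples_sup_of_relIndex_eq_prime hp₁
      (hL.relIndex_natCast_zsmul p₁) h₁ hidx₁ he₁ he₁',
    AddSubgroup.eq_zmultiples_sup_of_relIndex_eq_prime hp₂
      (hL.relIndex_natCast_zsmul p₂) h₂ hidx₂ he₂ he₂',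
    Nat.cast_mul]
  exact AddSubgroup.zmultiples_sup_zsmul_inf_zmultiples_sup_zsmul hcop (h₁ he₁) (h₂ he₂)
end

section
/- Let L be a lattice in ℂ with ℤ-basis (e₁, e₂) and let p be a prime number. Then the sublattices of L of index p are exactly the following p + 1 pairwise distinct subgroups: for each j = 0, 1, …, p−1, the subgroup generated by e₁ + j•e₂ and p•e₂; and the subgroup generated by p•e₁ and e₂. -/
/-! Transport everything to `ℤ²` along the isomorphism `(a, b) ↦ a • e₁ + b • e₂` onto `L`.
A subgroup of `ℤ²` of prime index `p` is the kernel of a nonzero homomorphism `ℤ² → ℤ/p`, that is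
of a form `(a, b) ↦ α a + β b` with `(α, β) ≠ 0`. Rescaling to `β = 1`, or to `α = 1` when
`β = 0`, does not change the kernel and leaves the `p + 1` forms `b - j a` (`0 ≤ j < p`) and `a`,
whose kernels are the listed subgroups. -/

open AddSubgroup Function Set

theorem AddSubgroup.exists_ker_eq_of_index_eq_prime {G : Type*} [AddCommGroup G] {p : ℕ}
    [Fact p.Prime] {H : AddSubgroup G} (hH : H.index = p) : ∃ f : G →+ ZMod p, f.ker = H := by
  have hcard : Nat.card (G ⧸ H) = Nat.card (ZMod p) := by rw [Nat.card_zmod]; exact hH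
  have : IsAddCyclic (G ⧸ H) := isAddCyclic_of_prime_card (hcard.trans (Nat.card_zmod p))
  refine ⟨(addEquivOfAddCyclicCardEq hcard).toAddMonoidHom.comp (QuotientAddGroup.mk' H), ?_⟩
  rw [AddMonoidHom.ker_comp_of_injective _ _ (AddEquiv.injective _), QuotientAddGroup.ker_mk']

theorem AddSubgroup.setOf_le_range_relIndex_eq {A B : Type*} [AddGroup A] [AddGroup B]
    {c : A →+ B} (hc : Injective c) (n : ℕ) :
    {K : AddSubgroup B | K ≤ c.range ∧ K.relIndex c.range = n} =
      map c '' {H | H.index = n} := by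
  ext K
  constructor
  · rintro ⟨hK, hn⟩
    exact ⟨K.comap c, by rwa [mem_ofPred_eq, index_comap], map_comap_eq_self hK⟩
  · rintro ⟨H, hH, rfl⟩
    refine ⟨map_le_range c H, ?_⟩
    rwa [← index_comap, comap_map_eq_self_of_injective hc]

theorem AddMonoidHom.ker_eq_of_apply_eq_mul {G K : Type*} [AddGroup G] [Field K]
    {f g : G →+ K} {u : K} (hu : u ≠ 0) (h : ∀ x, f x = u * g x) : f.ker = g.ker := by
  ext x
  simp [h, hu]

theorem AddMonoidHom.apply_eq_fst_mul_add_snd_mul {M : Type*} [Ring M] (f : ℤ × ℤ →+ M)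
    (x : ℤ × ℤ) : f x = x.1 * f (1, 0) + x.2 * f (0, 1) := by
  have hx : x = x.1 • ((1 : ℤ), (0 : ℤ)) + x.2 • ((0 : ℤ), (1 : ℤ)) := by ext <;> simp
  conv_lhs => rw [hx]
  rw [map_add, map_zsmul, map_zsmul, zsmul_eq_mul, zsmul_eq_mul]

def primeIndexSubgroup (p j : ℕ) : AddSubgroup (ℤ × ℤ) :=
  if j < p then closure {(1, (j : ℤ)), (0, (p : ℤ))} else closure {((p : ℤ), 0), (0, 1)}

def primeIndexForm (p j : ℕ) : ℤ × ℤ →+ ZMod p :=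
  (Int.castAddHom (ZMod p)).comp
    (if j < p then AddMonoidHom.snd ℤ ℤ - (j : ℤ) • AddMonoidHom.fst ℤ ℤ
      else AddMonoidHom.fst ℤ ℤ)

section primeIndex

variable {p j : ℕ}

theorem primeIndexForm_apply_of_lt (hj : j < p) (x : ℤ × ℤ) :
    primeIndexForm p j x = ((x.2 - j * x.1 : ℤ) : ZMod p) := by
  simp [primeIndexForm, hj]

theorem primeIndexForm_apply_of_le (hj : p ≤ j) (x : ℤ × ℤ) :
    primeIndexForm p j x = (x.1 : ZMod p) := by
  simp [primeIndexForm, hj.not_gt]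

theorem primeIndexSubgroup_eq_ker (p j : ℕ) :
    primeIndexSubgroup p j = (primeIndexForm p j).ker := by
  ext x
  unfold primeIndexSubgroup
  split_ifs with hj
  · rw [mem_closure_pair, AddMonoidHom.mem_ker, primeIndexForm_apply_of_lt hj,
      ZMod.intCast_zmod_eq_zero_iff_dvd]
    simp only [Prod.ext_iff, Prod.fst_add, Prod.snd_add, Prod.smul_fst, Prod.smul_snd,
      smul_eq_mul, mul_one, mul_zero, add_zero]
    constructor
    · rintro ⟨m, n, rfl, hn⟩
      exact ⟨n, by rw [← hn]; ring⟩
    · rintro ⟨n, hn⟩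
      exact ⟨x.1, n, rfl, by linarith⟩
  · rw [mem_closure_pair, AddMonoidHom.mem_ker, primeIndexForm_apply_of_le (not_lt.1 hj),
      ZMod.intCast_zmod_eq_zero_iff_dvd]
    simp only [Prod.ext_iff, Prod.fst_add, Prod.snd_add, Prod.smul_fst, Prod.smul_snd,
      smul_eq_mul, mul_one, mul_zero, add_zero, zero_add]
    constructor
    · rintro ⟨m, -, hm, -⟩
      exact hm ▸ dvd_mul_left _ _
    · rintro ⟨m, hm⟩
      exact ⟨m, x.2, by rw [hm, mul_comm], rfl⟩

theorem primeIndexForm_surjective (p j : ℕ) : Surjective (primeIndexForm p j) := by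
  intro y
  obtain ⟨z, rfl⟩ := ZMod.intCast_surjective y
  by_cases hj : j < p
  · exact ⟨(0, z), by simp [primeIndexForm_apply_of_lt hj]⟩
  · exact ⟨(z, 0), by simp [primeIndexForm, hj]⟩

theorem index_primeIndexSubgroup (p j : ℕ) : (primeIndexSubgroup p j).index = p := by
  rw [primeIndexSubgroup_eq_ker, index_ker,
    AddMonoidHom.range_eq_top.2 (primeIndexForm_surjective p j), card_top, Nat.card_zmod]

variable [Fact p.Prime]

theorem exists_ker_eq_primeIndexForm {f : ℤ × ℤ →+ ZMod p} (hf : f ≠ 0) :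
    ∃ j ≤ p, f.ker = (primeIndexForm p j).ker := by
  by_cases hβ : f (0, 1) = 0
  · have hα : f (1, 0) ≠ 0 := by
      intro hα
      exact hf (AddMonoidHom.ext fun x => by rw [f.apply_eq_fst_mul_add_snd_mul, hα, hβ]; simp)
    refine ⟨p, le_rfl, AddMonoidHom.ker_eq_of_apply_eq_mul hα fun x => ?_⟩
    rw [f.apply_eq_fst_mul_add_snd_mul, hβ, primeIndexForm_apply_of_le le_rfl]
    ring
  · set j := (-f (1, 0) / f (0, 1)).val
    have hj : (j : ZMod p) = -f (1, 0) / f (0, 1) := ZMod.natCast_zmod_val _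
    have hjp : j < p := ZMod.val_lt _
    refine ⟨j, hjp.le, AddMonoidHom.ker_eq_of_apply_eq_mul hβ fun x => ?_⟩
    rw [f.apply_eq_fst_mul_add_snd_mul, primeIndexForm_apply_of_lt hjp]
    push_cast
    rw [hj]
    field_simp
    ring

theorem eq_of_primeIndexSubgroup_eq {j k : ℕ} (hj : j < p) (hk : k ≤ p)
    (h : primeIndexSubgroup p j = primeIndexSubgroup p k) : j = k := by
  have hmem : ((1 : ℤ), (j : ℤ)) ∈ (primeIndexForm p k).ker := by
    rw [← primeIndexSubgroup_eq_ker, ← h, primeIndexSubgroup_eq_ker, AddMonoidHom.mem_ker,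
      primeIndexForm_apply_of_lt hj]
    simp
  rcases hk.lt_or_eq with hk | rfl
  · rw [AddMonoidHom.mem_ker, primeIndexForm_apply_of_lt hk] at hmem
    push_cast at hmem
    rwa [mul_one, sub_eq_zero, ZMod.natCast_eq_natCast_iff', Nat.mod_eq_of_lt hj,
      Nat.mod_eq_of_lt hk] at hmem
  · rw [AddMonoidHom.mem_ker, primeIndexForm_apply_of_le le_rfl] at hmem
    simp at hmem

theorem injOn_primeIndexSubgroup : InjOn (primeIndexSubgroup p) (Iic p) := by
  intro j hj k hk h
  rcases (mem_Iic.1 hj).lt_or_eq with hj | rfl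
  · exact eq_of_primeIndexSubgroup_eq hj hk h
  rcases (mem_Iic.1 hk).lt_or_eq with hk | rfl
  · exact (eq_of_primeIndexSubgroup_eq hk le_rfl h.symm).symm
  · rfl

theorem setOf_index_eq_prime :
    {H : AddSubgroup (ℤ × ℤ) | H.index = p} = primeIndexSubgroup p '' Iic p := by
  ext H
  constructor
  · intro hH
    obtain ⟨f, rfl⟩ := exists_ker_eq_of_index_eq_prime hH
    have hf : f ≠ 0 := by
      rintro rfl
      rw [mem_ofPred_eq, AddMonoidHom.ker_zero, index_top] at hH
      exact (Fact.out : p.Prime).one_lt.ne hH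
    obtain ⟨j, hj, hker⟩ := exists_ker_eq_primeIndexForm hf
    exact ⟨j, hj, by rw [hker, primeIndexSubgroup_eq_ker]⟩
  · rintro ⟨j, -, rfl⟩
    exact index_primeIndexSubgroup p j

end primeIndex

theorem map_coprod_primeIndexSubgroup {B : Type*} [AddCommGroup B] (e₁ e₂ : B) (p j : ℕ) :
    (primeIndexSubgroup p j).map ((zmultiplesHom B e₁).coprod (zmultiplesHom B e₂)) =
      if j < p then closure {e₁ + (j : ℤ) • e₂, (p : ℤ) • e₂}
      else closure {(p : ℤ) • e₁, e₂} := by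
  unfold primeIndexSubgroup
  split_ifs <;> simp [AddMonoidHom.map_closure, image_insert_eq]

theorem prime_index_sublattices_classification_general
    (L : AddSubgroup ℂ)
    (e₁ e₂ : ℂ) (he₁ : e₁ ∈ L) (he₂ : e₂ ∈ L)
    (hspan : ∀ x ∈ L, ∃ a b : ℤ, x = a • e₁ + b • e₂)
    (hindep : ∀ a b : ℤ, a • e₁ + b • e₂ = 0 → a = 0 ∧ b = 0)
    (p : ℕ) (hp : p.Prime)
    (F : ℕ → AddSubgroup ℂ)
    (hF : ∀ j : ℕ, F j =
      if j < p then AddSubgroup.closure {e₁ + (j : ℤ) • e₂, (p : ℤ) • e₂}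
      else AddSubgroup.closure {(p : ℤ) • e₁, e₂}) :
    Set.InjOn F (Set.Iic p) ∧
    {L' : AddSubgroup ℂ | L' ≤ L ∧ L'.relIndex L = p} = F '' Set.Iic p := by
  have : Fact p.Prime := ⟨hp⟩
  set c := (zmultiplesHom ℂ e₁).coprod (zmultiplesHom ℂ e₂)
  have hc : Injective c := (injective_iff_map_eq_zero c).2 fun x hx =>
    Prod.ext_iff.2 (hindep x.1 x.2 hx)
  have hrange : c.range = L := by
    refine le_antisymm ?_ fun x hx => ?_
    · rintro _ ⟨x, rfl⟩
      exact add_mem (zsmul_mem he₁ x.1) (zsmul_mem he₂ x.2)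
    · obtain ⟨a, b, rfl⟩ := hspan x hx
      exact ⟨(a, b), rfl⟩
  obtain rfl : F = fun j => (primeIndexSubgroup p j).map c :=
    funext fun j => (hF j).trans (map_coprod_primeIndexSubgroup e₁ e₂ p j).symm
  subst hrange
  refine ⟨(map_injective hc).comp_injOn injOn_primeIndexSubgroup, ?_⟩
  rw [setOf_le_range_relIndex_eq hc, setOf_index_eq_prime, image_image]

/-- Let `L` be a lattice with ℤ-basis `(e₁, e₂)` and `p` a prime.  The sublattices of
`L` of index `p` are exactly the following `p + 1` pairwise distinct subgroups: for
`j = 0, …, p−1` the subgroup generated by `e₁ + j•e₂` and `p•e₂`, and the subgroup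
generated by `p•e₁` and `e₂`. -/
theorem prime_index_sublattices_classification
    (L : AddSubgroup ℂ) (hL : IsLattice L)
    (e₁ e₂ : ℂ) (he₁ : e₁ ∈ L) (he₂ : e₂ ∈ L)
    (hspan : ∀ x ∈ L, ∃ a b : ℤ, x = a • e₁ + b • e₂)
    (hindep : ∀ a b : ℤ, a • e₁ + b • e₂ = 0 → a = 0 ∧ b = 0)
    (p : ℕ) (hp : p.Prime)
    (F : ℕ → AddSubgroup ℂ)
    (hF : ∀ j : ℕ, F j =
      if j < p then AddSubgroup.closure {e₁ + (j : ℤ) • e₂, (p : ℤ) • e₂}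
      else AddSubgroup.closure {(p : ℤ) • e₁, e₂}) :
    Set.InjOn F (Set.Iic p) ∧
    {L' : AddSubgroup ℂ | L' ≤ L ∧ L'.relIndex L = p} = F '' Set.Iic p :=
  prime_index_sublattices_classification_general L e₁ e₂ he₁ he₂ hspan hindep p hp F hF
end
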